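/- arXiv:2002.05974 — 2 statements merged into one kernel-verified Lean document; each statement's English description precedes it below -/
import Mathlib

section
/- Let Γ be a group generated by two elements whose abelianization is a free abelian group of rank 2. Then every non-surjective homomorphism Γ → A4 has abelian image, the number of conjugacy classes of non-surjective homomorphisms Γ → A4 equals 14, and the number of conjugacy classes of surjective homomorphisms Γ → A4 is 0, 2, 4, 6 or 8. -/
/-- The conjugation equivalence on homomorphisms `Γ →* G`. -/
def homConj (Γ G : Type*) [Group Γ] [Group G] : Setoid (Γ →* G) where
  r φ ψ := ∃ g : G, ∀ x, ψ x = g * φ x * g⁻¹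
  iseqv := by
    refine ⟨fun φ => ⟨1, by simp⟩, ?_, ?_⟩
    · rintro φ ψ ⟨g, hg⟩
      exact ⟨g⁻¹, fun x => by rw [hg x]; group⟩
    · rintro φ ψ χ ⟨g, hg⟩ ⟨h, hh⟩
      exact ⟨h * g, fun x => by rw [hh x, hg x]; group⟩

/-- `ks G Γ`: number of conjugacy classes of homomorphisms `Γ →* G`. -/
noncomputable def ks (G Γ : Type*) [Group G] [Group Γ] : ℕ :=
  Nat.card (Quotient (homConj Γ G))

/-- `ksw G Γ`: number of homomorphisms `Γ →* G`. -/
noncomputable def ksw (G Γ : Type*) [Group G] [Group Γ] : ℕ :=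
  Nat.card (Γ →* G)

/-- `ksSub G H Γ`: the number of conjugacy classes of homomorphisms `Γ →* G` whose
image is contained in some subgroup of `G` isomorphic to `H`. -/
noncomputable def ksSub (G : Type*) [Group G] (H : Type*) [Group H] (Γ : Type*) [Group Γ] : ℕ :=
  Nat.card (Quotient (Setoid.comap
    (Subtype.val : {φ : Γ →* G // ∃ K : Subgroup G, Nonempty (K ≃* H) ∧ φ.range ≤ K} → (Γ →* G))
    (homConj Γ G)))

/-- Number of conjugacy classes of homomorphisms `Γ →* G` satisfying a property `P`. -/
noncomputable def ksRestrict (G Γ : Type*) [Group G] [Group Γ] (P : (Γ →* G) → Prop) : ℕ :=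
  Nat.card (Quotient (Setoid.comap
    (Subtype.val : {φ : Γ →* G // P φ} → (Γ →* G)) (homConj Γ G)))

/-- A maximal abelian subgroup. -/
def IsMaximalAbelian {G : Type*} [Group G] (K : Subgroup G) : Prop :=
  IsMulCommutative K ∧ ∀ K' : Subgroup G, IsMulCommutative K' → K ≤ K' → K' = K

abbrev A4 : Type := alternatingGroup (Fin 4)
abbrev A5 : Type := alternatingGroup (Fin 5)
abbrev V4 : Type := Multiplicative (ZMod 2 × ZMod 2)
abbrev Z3 : Type := Multiplicative (ZMod 3)
abbrev Z5 : Type := Multiplicative (ZMod 5)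
/-- The free abelian group of rank `g`, written multiplicatively. -/
abbrev Zg (g : ℕ) : Type := Multiplicative (Fin g → ℤ)

/-!
A non-surjective homomorphism to `A4` lands in a proper subgroup. Such a subgroup has order
at most 4, since an index-two subgroup would contain the nine squares of `A4`, so it is abelian.
Hence the non-surjective homomorphisms are those factoring through the abelianization `ℤ²`,
and their conjugacy classes correspond to the 14 classes of commuting pairs in `A4`.
A surjective homomorphism is determined by the images of the two generators, which form a
non-commuting pair, and there are 8 classes of those. Composing with the outer automorphism of
`A4` (conjugation by a transposition of `S4`) is a fixed-point-free involution on the classes of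
surjections, so their number is even.
-/

open Function

theorem even_natCard_of_involutive {α : Type*} {f : α → α} (hf : Involutive f)
    (hfix : ∀ x, f x ≠ x) : Even (Nat.card α) := by
  classical
  cases finite_or_infinite α
  · have := Fintype.ofFinite α
    have hmod := Equiv.Perm.card_fixedPoints_modEq (f := (f : Function.End α)) (p := 2) (n := 1)
      (funext hf)
    have hno_fixed : Fintype.card (f : Function.End α).fixedPoints = 0 :=
      Fintype.card_eq_zero_iff.mpr ⟨fun x => hfix x.1 x.2⟩
    rw [Nat.card_eq_fintype_card, Nat.even_iff, hmod, hno_fixed]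
  · simp [Nat.card_eq_zero_of_infinite]

section HomConj

variable {Γ Δ G : Type*} [Group Γ] [Group Δ] [Group G]

theorem homConj_comp_iff {π : Γ →* Δ} (hπ : Surjective π) (ψ ψ' : Δ →* G) :
    homConj Γ G (ψ.comp π) (ψ'.comp π) ↔ homConj Δ G ψ ψ' :=
  exists_congr fun g => (hπ.forall (p := fun y => ψ' y = g * ψ y * g⁻¹)).symm

theorem ks_congr_left (e : Γ ≃* Δ) : ks G Γ = ks G Δ :=
  Nat.card_congr <| Quotient.congr e.monoidHomCongrLeftEquiv fun ψ ψ' =>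
    (homConj_comp_iff e.symm.surjective ψ ψ').symm

def Abelianization.homEquivCommute :
    (Abelianization Γ →* G) ≃ {φ : Γ →* G // ∀ x y, Commute (φ x) (φ y)} where
  toFun ψ := ⟨ψ.comp Abelianization.of, fun x y => by
    simp only [MonoidHom.comp_apply, Commute, SemiconjBy, ← map_mul, mul_comm]⟩
  invFun φ := QuotientGroup.lift _ φ.1 <| by
    rw [commutator_def, Subgroup.commutator_le]
    intro x _ y _
    rw [MonoidHom.mem_ker, map_commutatorElement, commutatorElement_eq_one_iff_commute]
    exact φ.2 x y
  left_inv ψ := Abelianization.hom_ext _ _ rfl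
  right_inv φ := rfl

theorem ksRestrict_commute_eq_ks_abelianization :
    ksRestrict G Γ (fun φ => ∀ x y, Commute (φ x) (φ y)) = ks G (Abelianization Γ) :=
  (Nat.card_congr <| Quotient.congr Abelianization.homEquivCommute fun ψ ψ' =>
    (homConj_comp_iff QuotientGroup.mk_surjective ψ ψ').symm).symm

theorem even_ksRestrict_surjective (σ : MulAut G) (hσ : Involutive σ)
    (houter : ∀ g : G, σ ≠ MulAut.conj g) : Even (ksRestrict G Γ fun φ => Surjective φ) := by
  let S := {φ : Γ →* G // Surjective φ}
  let twist : S → S := fun φ => ⟨σ.toMonoidHom.comp φ.1, σ.surjective.comp φ.2⟩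
  have htwist : ∀ φ ψ : S, homConj Γ G φ.1 ψ.1 → homConj Γ G (twist φ).1 (twist ψ).1 :=
    fun φ ψ ⟨g, hg⟩ => ⟨σ g, fun x => by simp [twist, hg x]⟩
  refine even_natCard_of_involutive (f := Quotient.map twist htwist) ?_ ?_
  · rintro ⟨φ⟩
    exact congrArg _ (Subtype.ext (MonoidHom.ext fun x => hσ (φ.1 x)))
  · rintro ⟨φ⟩ h
    obtain ⟨g, hg⟩ := Quotient.exact h
    refine houter g⁻¹ (MulEquiv.ext fun y => ?_)
    obtain ⟨x, rfl⟩ := φ.2 y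
    rw [MulAut.conj_apply, inv_inv]
    conv_rhs => rw [hg x]
    change σ (φ.1 x) = g⁻¹ * (g * σ (φ.1 x) * g⁻¹) * g
    group

end HomConj

section Pairs

variable {Γ G : Type*} [Group Γ] [Group G]

def pairConj (G : Type*) [Group G] : Setoid (G × G) where
  r p q := ∃ g : G, q.1 = g * p.1 * g⁻¹ ∧ q.2 = g * p.2 * g⁻¹
  iseqv := by
    refine ⟨fun p => ⟨1, by simp, by simp⟩, ?_, ?_⟩
    · rintro p q ⟨g, h1, h2⟩
      exact ⟨g⁻¹, by rw [h1]; group, by rw [h2]; group⟩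
    · rintro p q r ⟨g, h1, h2⟩ ⟨k, h3, h4⟩
      exact ⟨k * g, by rw [h3, h1]; group, by rw [h4, h2]; group⟩

def pairConjOn (P : G × G → Prop) : Setoid {p : G × G // P p} :=
  (pairConj G).comap Subtype.val

instance [Fintype G] [DecidableEq G] (P : G × G → Prop) : DecidableRel (pairConjOn P).r :=
  fun _ _ => inferInstanceAs (Decidable (∃ _ : G, _ ∧ _))

theorem homConj_iff_pairConj {a b : Γ} (hab : Subgroup.closure {a, b} = ⊤) (φ ψ : Γ →* G) :
    homConj Γ G φ ψ ↔ pairConj G (φ a, φ b) (ψ a, ψ b) := by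
  refine ⟨fun ⟨g, hg⟩ => ⟨g, hg a, hg b⟩, fun ⟨g, ha, hb⟩ => ⟨g, fun x => ?_⟩⟩
  have hconj : ψ = (MulAut.conj g).toMonoidHom.comp φ :=
    MonoidHom.eq_of_eqOn_dense hab <| by
      rintro x (rfl | rfl)
      exacts [ha, hb]
  rw [hconj]
  rfl

theorem ksRestrict_le_card_pairConjOn [Finite G] {a b : Γ} (hab : Subgroup.closure {a, b} = ⊤)
    {P : (Γ →* G) → Prop} {Q : G × G → Prop} (hPQ : ∀ φ, P φ → Q (φ a, φ b)) :
    ksRestrict G Γ P ≤ Nat.card (Quotient (pairConjOn Q)) := by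
  let f : {φ // P φ} → {p // Q p} := fun φ => ⟨(φ.1 a, φ.1 b), hPQ φ.1 φ.2⟩
  have hf : ∀ φ ψ, homConj Γ G φ.1 ψ.1 ↔ pairConjOn Q (f φ) (f ψ) :=
    fun φ ψ => homConj_iff_pairConj hab φ.1 ψ.1
  refine Nat.card_le_card_of_injective (Quotient.map f fun φ ψ => (hf φ ψ).1) ?_
  rintro ⟨φ⟩ ⟨ψ⟩ h
  exact Quotient.sound ((hf φ ψ).2 (Quotient.exact h))

theorem MonoidHom.commute_apply_of_closure_pair {a b : Γ} (hab : Subgroup.closure {a, b} = ⊤)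
    (φ : Γ →* G) (h : Commute (φ a) (φ b)) (x y : Γ) : Commute (φ x) (φ y) := by
  have hrange : φ.range = Subgroup.closure {φ a, φ b} := by
    rw [MonoidHom.range_eq_map, ← hab, MonoidHom.map_closure, Set.image_pair]
  have : IsMulCommutative φ.range := hrange ▸ Subgroup.isMulCommutative_closure <| by
    rintro _ (rfl | rfl) _ (rfl | rfl)
    exacts [rfl, h, h.symm, rfl]
  exact setLike_mul_comm (φ.mem_range.mpr ⟨x, rfl⟩) (φ.mem_range.mpr ⟨y, rfl⟩)

end Pairs

namespace Zg

def single {n : ℕ} (i : Fin n) : Zg n := Multiplicative.ofAdd (Pi.single i 1)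

theorem single_zpow_mul_single_zpow (m : Zg 2) :
    single 0 ^ Multiplicative.toAdd m 0 * single 1 ^ Multiplicative.toAdd m 1 = m := by
  ext i
  fin_cases i <;> simp [single]

theorem closure_single_pair : Subgroup.closure {single 0, single 1} = (⊤ : Subgroup (Zg 2)) :=
  eq_top_iff.mpr fun m _ => single_zpow_mul_single_zpow m ▸
    mul_mem (zpow_mem (Subgroup.subset_closure (by simp)) _)
      (zpow_mem (Subgroup.subset_closure (by simp)) _)

variable {G : Type*} [Group G]

def liftPair (x y : G) (h : Commute x y) : Zg 2 →* G where
  toFun m := x ^ Multiplicative.toAdd m 0 * y ^ Multiplicative.toAdd m 1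
  map_one' := by simp
  map_mul' m n := by
    simp only [toAdd_mul, Pi.add_apply, zpow_add]
    exact (h.zpow_zpow _ _).mul_mul_mul_comm _ _

def homEquivCommute : (Zg 2 →* G) ≃ {p : G × G // Commute p.1 p.2} where
  toFun ψ := ⟨(ψ (single 0), ψ (single 1)), (Commute.all _ _).map ψ⟩
  invFun p := liftPair p.1.1 p.1.2 p.2
  left_inv ψ := MonoidHom.eq_of_eqOn_dense closure_single_pair <| by
    rintro x (rfl | rfl) <;> simp [liftPair, single]
  right_inv p := by ext <;> simp [liftPair, single]

theorem ks_two (G : Type*) [Group G] :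
    ks G (Zg 2) = Nat.card (Quotient (pairConjOn fun p : G × G => Commute p.1 p.2)) :=
  Nat.card_congr <| Quotient.congr homEquivCommute fun ψ ψ' =>
    homConj_iff_pairConj closure_single_pair ψ ψ'

end Zg

theorem isMulCommutative_of_natCard_lt_six {G : Type*} [Group G] [Finite G]
    (h6 : Nat.card G < 6) : IsMulCommutative G := by
  have hprime : ∀ p : ℕ, p.Prime → Nat.card G = p → IsMulCommutative G := fun p hp hG => by
    have : Fact p.Prime := ⟨hp⟩
    have := isCyclic_of_prime_card hG
    infer_instance
  have h0 : 0 < Nat.card G := Nat.card_pos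
  interval_cases hG : Nat.card G
  · have := (Nat.card_eq_one_iff_unique.mp hG).1
    exact ⟨⟨fun x y => Subsingleton.elim _ _⟩⟩
  · exact hprime 2 Nat.prime_two rfl
  · exact hprime 3 Nat.prime_three rfl
  · exact IsPGroup.isMulCommutative_of_card_eq_prime_sq (p := 2) hG
  · exact hprime 5 Nat.prime_five rfl

instance {G : Type*} [Mul G] [DecidableEq G] : DecidableRel (Commute : G → G → Prop) :=
  fun x y => inferInstanceAs (Decidable (x * y = y * x))

namespace A4

theorem card_eq : Nat.card A4 = 12 := by
  rw [Nat.card_eq_fintype_card]; rfl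

theorem card_subgroup_ne_six (K : Subgroup A4) : Nat.card K ≠ 6 := by
  intro hK
  have hindex : K.index = 2 := by
    have := K.card_mul_index
    rw [hK, card_eq] at this
    omega
  have hsquares : Nat.card {g : A4 | IsSquare g} = 9 := by
    rw [Nat.card_eq_fintype_card]; decide
  have hsub : {g : A4 | IsSquare g} ⊆ K := by
    rintro _ ⟨r, rfl⟩
    exact K.mul_self_mem_of_index_two hindex r
  have : Nat.card {g : A4 | IsSquare g} ≤ Nat.card K :=
    Nat.card_le_card_of_injective _ (Set.inclusion_injective hsub)
  omega

theorem isMulCommutative_of_ne_top {K : Subgroup A4} (hK : K ≠ ⊤) : IsMulCommutative K := by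
  have hdvd : Nat.card K ∈ Nat.divisors 12 :=
    Nat.mem_divisors.mpr ⟨card_eq ▸ K.card_subgroup_dvd_card, by norm_num⟩
  have h12 : Nat.card K ≠ 12 := fun h => hK (K.eq_top_of_card_eq (h.trans card_eq.symm))
  have h6 := card_subgroup_ne_six K
  simp only [show Nat.divisors 12 = {1, 2, 3, 4, 6, 12} from rfl, Finset.mem_insert,
    Finset.mem_singleton] at hdvd
  exact isMulCommutative_of_natCard_lt_six (by omega)

theorem exists_not_commute : ∃ x y : A4, ¬Commute x y := by decide

theorem not_surjective_iff_commute {Γ : Type*} [Group Γ] (φ : Γ →* A4) :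
    ¬Surjective φ ↔ ∀ x y, Commute (φ x) (φ y) := by
  refine ⟨fun hφ x y => ?_, fun h hφ => ?_⟩
  · have := isMulCommutative_of_ne_top (mt MonoidHom.range_eq_top.mp hφ)
    exact setLike_mul_comm (φ.mem_range.mpr ⟨x, rfl⟩) (φ.mem_range.mpr ⟨y, rfl⟩)
  · obtain ⟨x, y, hxy⟩ := exists_not_commute
    obtain ⟨x, rfl⟩ := hφ x
    obtain ⟨y, rfl⟩ := hφ y
    exact hxy (h x y)

set_option maxRecDepth 40000 in
theorem card_pairConjOn_commute :
    Nat.card (Quotient (pairConjOn fun p : A4 × A4 => Commute p.1 p.2)) = 14 := by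
  rw [Nat.card_eq_fintype_card]; decide

set_option maxRecDepth 40000 in
theorem card_pairConjOn_not_commute :
    Nat.card (Quotient (pairConjOn fun p : A4 × A4 => ¬Commute p.1 p.2)) = 8 := by
  rw [Nat.card_eq_fintype_card]; decide

theorem exists_outer_involution :
    ∃ σ : MulAut A4, Involutive σ ∧ ∀ g, σ ≠ MulAut.conj g := by
  refine ⟨MulAut.conjNormal (Equiv.swap (0 : Fin 4) 1), fun x => ?_, fun g h => ?_⟩
  · ext1
    simp [MulAut.conjNormal_apply, mul_assoc]
  · have hnot_inner : ∀ g : A4, ∃ x : A4, Equiv.swap 0 1 * (x : Equiv.Perm (Fin 4)) *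
        Equiv.swap 0 1 ≠ (↑(g * x * g⁻¹) : Equiv.Perm (Fin 4)) := by
      decide
    obtain ⟨x, hx⟩ := hnot_inner g
    exact hx <| by
      simpa [MulAut.conjNormal_apply] using congrArg Subtype.val (DFunLike.congr_fun h x)

end A4

theorem statement_13 (Γ : Type*) [Group Γ]
    (hgen : ∃ a b : Γ, Subgroup.closure {a, b} = (⊤ : Subgroup Γ))
    (hab : Nonempty (Abelianization Γ ≃* Zg 2)) :
    (∀ φ : Γ →* A4, ¬Function.Surjective φ → ∀ x y : Γ, φ x * φ y = φ y * φ x) ∧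
    ksRestrict A4 Γ (fun φ => ¬Function.Surjective φ) = 14 ∧
    (ksRestrict A4 Γ (fun φ => Function.Surjective φ) = 0 ∨
      ksRestrict A4 Γ (fun φ => Function.Surjective φ) = 2 ∨
      ksRestrict A4 Γ (fun φ => Function.Surjective φ) = 4 ∨
      ksRestrict A4 Γ (fun φ => Function.Surjective φ) = 6 ∨
      ksRestrict A4 Γ (fun φ => Function.Surjective φ) = 8) := by
  obtain ⟨a, b, hgen⟩ := hgen
  obtain ⟨e⟩ := hab
  refine ⟨fun φ hφ => (A4.not_surjective_iff_commute φ).mp hφ, ?_, ?_⟩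
  · calc ksRestrict A4 Γ (fun φ => ¬Surjective φ)
        = ksRestrict A4 Γ (fun φ => ∀ x y, Commute (φ x) (φ y)) :=
          congrArg _ (funext fun φ => propext (A4.not_surjective_iff_commute φ))
      _ = ks A4 (Zg 2) := ksRestrict_commute_eq_ks_abelianization.trans (ks_congr_left e)
      _ = 14 := (Zg.ks_two A4).trans A4.card_pairConjOn_commute
  · have hle : ksRestrict A4 Γ (fun φ => Surjective φ) ≤ 8 :=
      A4.card_pairConjOn_not_commute ▸ ksRestrict_le_card_pairConjOn hgen fun φ hφ hcomm =>
        (A4.not_surjective_iff_commute φ).mpr (φ.commute_apply_of_closure_pair hgen hcomm) hφ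
    obtain ⟨σ, hσ, houter⟩ := A4.exists_outer_involution
    obtain ⟨k, hk⟩ := even_ksRestrict_surjective (Γ := Γ) σ hσ houter
    omega
end

section
/- Let g ≥ 1 and let Γ' be a finitely generated group whose abelianization is a free abelian group of rank g − 1. Then ks_{A5}(ℤ * Γ') = 60·ks_{A5}(Γ') − 19·3^{g−1} − 14·4^{g−1} − 22·5^{g−1}; in particular, 60 divides ks_{A5}(ℤ * Γ') + 19·3^{g−1} + 14·4^{g−1} + 22·5^{g−1}. -/
/-!
By Burnside's lemma for the conjugation action of `G` on `Hom(Γ, G)`, `|G| · ks_G(Γ)` is the sum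
over `g ∈ G` of the number of homomorphisms `Γ → C_G(g)`. In `A5` every nontrivial element has an
abelian centralizer, of order `3`, `4` or `5` (for `20`, `15` and `24` elements respectively), and
homomorphisms from `Γ'` into an abelian group `C` factor through `ℤ^(g-1)`, so there are
`|C|^(g-1)` of them. A homomorphism `ℤ * Γ' → C` is a homomorphism `Γ' → C` together with an
element of `C`. Comparing the two Burnside sums, the contributions of `g = 1` differ by the factor
`60`, which gives the formula.
-/

open Finset Subgroup

section Conjugation

variable (Γ G : Type*) [Group Γ] [Group G]

abbrev conjMulAction : MulAction G (Γ →* G) where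
  smul g φ := (MulAut.conj g).toMonoidHom.comp φ
  one_smul φ := by
    ext x
    change 1 * φ x * 1⁻¹ = φ x
    group
  mul_smul g h φ := by
    ext x
    change g * h * φ x * (g * h)⁻¹ = g * (h * φ x * h⁻¹) * g⁻¹
    group

attribute [local instance] conjMulAction

variable {Γ G} in
@[simp]
theorem conj_smul_apply (g : G) (φ : Γ →* G) (x : Γ) : (g • φ) x = g * φ x * g⁻¹ := rfl

theorem homConj_eq_orbitRel : homConj Γ G = MulAction.orbitRel G (Γ →* G) := by
  ext φ ψ
  refine ⟨fun ⟨g, hg⟩ => ⟨g⁻¹, ?_⟩, fun ⟨g, hg⟩ => ⟨g⁻¹, fun x => ?_⟩⟩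
  · ext x
    simp [hg x, mul_assoc]
  · rw [← hg]
    simp [mul_assoc]

variable {Γ G} in
def homSubtypeEquivCodRestrict (H : Subgroup G) :
    {φ : Γ →* G // ∀ x, φ x ∈ H} ≃ (Γ →* H) where
  toFun φ := φ.1.codRestrict H φ.2
  invFun ψ := ⟨H.subtype.comp ψ, fun x => (ψ x).2⟩
  left_inv _ := rfl
  right_inv _ := rfl

theorem nat_card_fixedBy_conj (g : G) :
    Nat.card (MulAction.fixedBy (Γ →* G) g) = Nat.card (Γ →* centralizer {g}) := by
  refine Nat.card_congr (.trans (Equiv.subtypeEquivRight fun φ => ?_)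
    (homSubtypeEquivCodRestrict _))
  simp only [MulAction.mem_fixedBy, MonoidHom.ext_iff, conj_smul_apply,
    mem_centralizer_singleton_iff, mul_inv_eq_iff_eq_mul]
  exact forall_congr' fun _ => eq_comm

theorem ks_mul_card [Fintype G] [Finite (Γ →* G)] :
    ks G Γ * Nat.card G = ∑ g : G, Nat.card (Γ →* centralizer {g}) := by
  have := Fintype.ofFinite (Γ →* G)
  classical
  simp only [ks, homConj_eq_orbitRel, Nat.card_eq_fintype_card, ← nat_card_fixedBy_conj]
  exact (MulAction.sum_card_fixedBy_eq_card_orbits_mul_card_group G (Γ →* G)).symm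

theorem ks_mul_card_eq_add_sum [Fintype G] [DecidableEq G] [Finite (Γ →* G)] :
    ks G Γ * Nat.card G =
      Nat.card (Γ →* G) + ∑ g ∈ univ.erase (1 : G), Nat.card (Γ →* centralizer {g}) := by
  have hcentralizer_one : centralizer {(1 : G)} = ⊤ := by
    simp [centralizer_eq_top_iff_subset]
  rw [ks_mul_card, ← add_sum_erase _ _ (mem_univ 1), hcentralizer_one,
    Nat.card_congr (MulEquiv.monoidHomCongrRightEquiv topEquiv)]

end Conjugation

section CountingHomomorphisms

variable {Γ : Type*} [Group Γ]

theorem finite_monoidHom_of_fg (hΓ : Group.FG Γ) (G : Type*) [Group G] [Finite G] :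
    Finite (Γ →* G) := by
  obtain ⟨S, hS⟩ := hΓ.out
  exact Finite.of_injective (fun φ : Γ →* G => fun s : S => φ s)
    fun φ ψ h => MonoidHom.eq_of_eqOn_dense hS fun x hx => congrFun h ⟨x, hx⟩

open scoped IsMulCommutative in
theorem nat_card_monoidHom_of_abelianization {n : ℕ} (e : Abelianization Γ ≃* Zg n)
    (C : Type*) [Group C] [IsMulCommutative C] : Nat.card (Γ →* C) = Nat.card C ^ n := by
  let toPi : (Γ →* C) ≃ (Fin n → Additive C) :=
    Abelianization.lift.trans <| (MulEquiv.monoidHomCongrLeftEquiv e).trans <|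
      AddMonoidHom.toMultiplicativeLeft.symm.trans <|
        (addMonoidHomLequivInt ℤ).toEquiv.trans ((Pi.basisFun ℤ (Fin n)).constr ℤ).toEquiv.symm
  rw [Nat.card_congr toPi, Nat.card_pi, prod_const, card_univ, Fintype.card_fin,
    Nat.card_congr Additive.toMul]

theorem nat_card_coprod_monoidHom (Γ' H : Type*) [Group Γ'] [Group H] :
    Nat.card (Monoid.Coprod (Multiplicative ℤ) Γ' →* H) = Nat.card H * Nat.card (Γ' →* H) := by
  rw [← Nat.card_congr Monoid.Coprod.liftEquiv, Nat.card_prod,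
    Nat.card_congr (zpowersHom H).symm]

end CountingHomomorphisms

namespace A5

-- The order of the centralizer, in a form that `decide` can evaluate.
def centralizerCard (g : A5) : ℕ := #{h | h * g = g * h}

theorem nat_card_centralizer (g : A5) : Nat.card (centralizer {g}) = centralizerCard g := by
  rw [centralizerCard, ← Fintype.card_subtype, ← Nat.card_eq_fintype_card]
  exact Nat.card_congr (Equiv.subtypeEquivRight fun _ => mem_centralizer_singleton_iff)

set_option maxHeartbeats 4000000 in
theorem centralizerCard_mem :
    ∀ g ∈ univ.erase (1 : A5), centralizerCard g ∈ ({3, 4, 5} : Finset ℕ) := by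
  decide

set_option maxHeartbeats 4000000 in
theorem card_filter_centralizerCard :
    #{g ∈ univ.erase (1 : A5) | centralizerCard g = 3} = 20 ∧
    #{g ∈ univ.erase (1 : A5) | centralizerCard g = 4} = 15 ∧
    #{g ∈ univ.erase (1 : A5) | centralizerCard g = 5} = 24 := by
  decide

theorem sum_erase_one_centralizerCard {M : Type*} [AddCommMonoid M] (F : ℕ → M) :
    ∑ g ∈ univ.erase (1 : A5), F (centralizerCard g) = 20 • F 3 + 15 • F 4 + 24 • F 5 := by
  obtain ⟨h3, h4, h5⟩ := card_filter_centralizerCard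
  have hfiber (b : ℕ) : ∑ g ∈ univ.erase (1 : A5) with centralizerCard g = b,
      F (centralizerCard g) = #{g ∈ univ.erase (1 : A5) | centralizerCard g = b} • F b := by
    rw [← sum_const]
    exact sum_congr rfl fun g hg => congrArg F (mem_filter.mp hg).2
  rw [← sum_fiberwise_of_maps_to centralizerCard_mem]
  simp only [hfiber, h3, h4, h5, sum_insert (by decide : (3 : ℕ) ∉ ({4, 5} : Finset ℕ)),
    sum_insert (by decide : (4 : ℕ) ∉ ({5} : Finset ℕ)), sum_singleton, add_assoc]

theorem isMulCommutative_centralizer {g : A5} (hg : g ∈ univ.erase 1) :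
    IsMulCommutative (centralizer {g}) := by
  have hcard := nat_card_centralizer g
  have := centralizerCard_mem g hg
  simp only [mem_insert, mem_singleton] at this
  rcases this with h | h | h
  · have : Fact (Nat.Prime 3) := ⟨by norm_num⟩
    have := isCyclic_of_prime_card (p := 3) (hcard.trans h)
    infer_instance
  · have : Fact (Nat.Prime 2) := ⟨by norm_num⟩
    exact IsPGroup.isMulCommutative_of_card_eq_prime_sq (p := 2) (hcard.trans h)
  · have : Fact (Nat.Prime 5) := ⟨by norm_num⟩
    have := isCyclic_of_prime_card (p := 5) (hcard.trans h)
    infer_instance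

theorem nat_card : Nat.card A5 = 60 := by
  rw [nat_card_alternatingGroup, Nat.card_fin]
  rfl

variable {Γ : Type*} [Group Γ] {n : ℕ}

theorem ks_mul_sixty (hΓ : Group.FG Γ) (e : Abelianization Γ ≃* Zg n) :
    ks A5 Γ * 60 = Nat.card (Γ →* A5) + (20 * 3 ^ n + 15 * 4 ^ n + 24 * 5 ^ n) := by
  have := finite_monoidHom_of_fg hΓ A5
  have hsum : ∑ g ∈ univ.erase (1 : A5), Nat.card (Γ →* centralizer {g}) =
      ∑ g ∈ univ.erase (1 : A5), centralizerCard g ^ n :=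
    sum_congr rfl fun g hg => by
      have := isMulCommutative_centralizer hg
      rw [nat_card_monoidHom_of_abelianization e, nat_card_centralizer]
  rw [← nat_card, ks_mul_card_eq_add_sum, hsum, sum_erase_one_centralizerCard (· ^ n)]
  simp only [smul_eq_mul]

theorem ks_coprod_mul_sixty (hΓ : Group.FG Γ) (e : Abelianization Γ ≃* Zg n) :
    ks A5 (Monoid.Coprod (Multiplicative ℤ) Γ) * 60 =
      60 * Nat.card (Γ →* A5) + (20 * 3 ^ (n + 1) + 15 * 4 ^ (n + 1) + 24 * 5 ^ (n + 1)) := by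
  have := finite_monoidHom_of_fg hΓ A5
  have : Finite (Multiplicative ℤ →* A5) := .of_equiv _ (zpowersHom A5)
  have : Finite (Monoid.Coprod (Multiplicative ℤ) Γ →* A5) :=
    .of_equiv _ Monoid.Coprod.liftEquiv
  have hsum : ∑ g ∈ univ.erase (1 : A5),
      Nat.card (Monoid.Coprod (Multiplicative ℤ) Γ →* centralizer {g}) =
      ∑ g ∈ univ.erase (1 : A5), centralizerCard g ^ (n + 1) :=
    sum_congr rfl fun g hg => by
      have := isMulCommutative_centralizer hg
      rw [nat_card_coprod_monoidHom, nat_card_monoidHom_of_abelianization e,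
        nat_card_centralizer, pow_succ']
  rw [← nat_card, ks_mul_card_eq_add_sum, nat_card_coprod_monoidHom, hsum,
    sum_erase_one_centralizerCard (· ^ (n + 1))]
  simp only [smul_eq_mul]

end A5

theorem statement_17_general (g : ℕ) (Γ' : Type*) [Group Γ'] (hΓ' : Group.FG Γ')
    (hab : Nonempty (Abelianization Γ' ≃* Zg (g - 1))) :
    (ks A5 (Monoid.Coprod (Multiplicative ℤ) Γ') : ℤ) =
        60 * (ks A5 Γ' : ℤ) - 19 * 3 ^ (g - 1) - 14 * 4 ^ (g - 1) - 22 * 5 ^ (g - 1) ∧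
    (60 : ℤ) ∣ (ks A5 (Monoid.Coprod (Multiplicative ℤ) Γ') : ℤ)
        + 19 * 3 ^ (g - 1) + 14 * 4 ^ (g - 1) + 22 * 5 ^ (g - 1) := by
  obtain ⟨e⟩ := hab
  have hΓ'_sum := congrArg (Nat.cast : ℕ → ℤ) (A5.ks_mul_sixty hΓ' e)
  have hcoprod_sum := congrArg (Nat.cast : ℕ → ℤ) (A5.ks_coprod_mul_sixty hΓ' e)
  push_cast [pow_succ] at hΓ'_sum hcoprod_sum
  exact ⟨by linarith, ⟨ks A5 Γ', by linarith⟩⟩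

theorem statement_17 (g : ℕ) (hg : 1 ≤ g) (Γ' : Type*) [Group Γ'] (hΓ' : Group.FG Γ')
    (hab : Nonempty (Abelianization Γ' ≃* Zg (g - 1))) :
    (ks A5 (Monoid.Coprod (Multiplicative ℤ) Γ') : ℤ) =
        60 * (ks A5 Γ' : ℤ) - 19 * 3 ^ (g - 1) - 14 * 4 ^ (g - 1) - 22 * 5 ^ (g - 1) ∧
    (60 : ℤ) ∣ (ks A5 (Monoid.Coprod (Multiplicative ℤ) Γ') : ℤ)
        + 19 * 3 ^ (g - 1) + 14 * 4 ^ (g - 1) + 22 * 5 ^ (g - 1) :=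
  statement_17_general g Γ' hΓ' hab
end
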